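/- arXiv:1812.02064 — 13 statements merged into one kernel-verified Lean document; each statement's English description precedes it below -/
import Mathlib

section
/- Let S ⊆ ℕ² be a good semigroup that is local (the only element of S with a zero component is (0,0)). Then S has a smallest nonzero element with respect to the componentwise partial order, i.e., there exists e ∈ S, e ≠ (0,0), such that e ≤ α for every nonzero α ∈ S. -/
/-! Locality makes the coordinates of a nonzero element positive, so the nonzero elements are
closed under componentwise minimum; (G3) makes them nonempty. In the well-founded lattice `ℕ²`,
a minimal element `e` of a min-closed set is least, since `e ⊓ p` lies in the set below `e`. -/

theorem InfClosed.exists_isLeast {α : Type*} [SemilatticeInf α] [WellFoundedLT α] {s : Set α}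
    (hs : InfClosed s) (hne : s.Nonempty) : ∃ a, IsLeast s a := by
  obtain ⟨a, ha⟩ := exists_minimal_of_wellFoundedLT (· ∈ s) hne
  exact ⟨a, ha.prop, fun b hb => inf_eq_left.mp (ha.eq_of_le (hs ha.prop hb) inf_le_left)⟩

theorem exists_min_nonzero_general (S : Set (ℕ × ℕ))
    (hG1 : ∀ a ∈ S, ∀ b ∈ S, ((min a.1 b.1, min a.2 b.2) : ℕ × ℕ) ∈ S)
    (hG3 : ∃ c : ℕ × ℕ, ∀ b : ℕ × ℕ, c + b ∈ S)
    (hlocal : ∀ p ∈ S, (p.1 = 0 ∨ p.2 = 0) → p = (0, 0)) :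
    ∃ e ∈ S, e ≠ (0, 0) ∧ ∀ p ∈ S, p ≠ (0, 0) → e ≤ p := by
  obtain ⟨c, hc⟩ := hG3
  have hfst_pos : ∀ p ∈ S, p ≠ (0, 0) → 0 < p.1 := fun p hp hp0 =>
    Nat.pos_of_ne_zero fun h => hp0 (hlocal p hp (Or.inl h))
  have hclosed : InfClosed {p | p ∈ S ∧ p ≠ (0, 0)} := by
    rintro p ⟨hp, hp0⟩ q ⟨hq, hq0⟩
    refine ⟨hG1 p hp q hq, fun h => ?_⟩
    have hmin : min p.1 q.1 = 0 := congrArg Prod.fst h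
    exact (lt_min (hfst_pos p hp hp0) (hfst_pos q hq hq0)).ne' hmin
  obtain ⟨e, ⟨heS, he0⟩, hleast⟩ :=
    hclosed.exists_isLeast ⟨c + (1, 1), hc _, by simp [Prod.ext_iff]⟩
  exact ⟨e, heS, he0, fun p hp hp0 => hleast ⟨hp, hp0⟩⟩

/-- A local good semigroup `S ⊆ ℕ²` has a smallest nonzero element with respect
to the componentwise partial order. -/
theorem exists_min_nonzero (S : Set (ℕ × ℕ))
    (hzero : ((0, 0) : ℕ × ℕ) ∈ S)
    (hadd : ∀ a ∈ S, ∀ b ∈ S, a + b ∈ S)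
    (hG1 : ∀ a ∈ S, ∀ b ∈ S, ((min a.1 b.1, min a.2 b.2) : ℕ × ℕ) ∈ S)
    (hG2fst : ∀ a ∈ S, ∀ b ∈ S, a.1 = b.1 → a.2 ≠ b.2 →
      ∃ d ∈ S, a.1 < d.1 ∧ d.2 = min a.2 b.2)
    (hG2snd : ∀ a ∈ S, ∀ b ∈ S, a.2 = b.2 → a.1 ≠ b.1 →
      ∃ d ∈ S, a.2 < d.2 ∧ d.1 = min a.1 b.1)
    (hG3 : ∃ c : ℕ × ℕ, ∀ b : ℕ × ℕ, c + b ∈ S)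
    (hlocal : ∀ p ∈ S, (p.1 = 0 ∨ p.2 = 0) → p = (0, 0)) :
    ∃ e ∈ S, e ≠ (0, 0) ∧ ∀ p ∈ S, p ≠ (0, 0) → e ≤ p :=
  exists_min_nonzero_general S hG1 hG3 hlocal
end

section
/- Let S ⊆ ℕ² be a local good semigroup with minimal nonzero element e. Then e + S is a good ideal of S: it is a relative ideal contained in S and satisfies properties (G1) and (G2). -/
/-! Translation by `e` is an order automorphism of `ℤ²` that commutes with componentwise minima
and preserves which coordinates of two points agree, so (G1) and (G2) pass from `S` to `e + S`. -/

/-- Points strictly above `b` on the same vertical line. -/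
def Delta1 (b : ℤ × ℤ) : Set (ℤ × ℤ) := {d | d.1 = b.1 ∧ b.2 < d.2}

/-- Points strictly to the right of `b` on the same horizontal line. -/
def Delta2 (b : ℤ × ℤ) : Set (ℤ × ℤ) := {d | d.2 = b.2 ∧ b.1 < d.1}

/-- `Delta b = Delta1 b ∪ Delta2 b`. -/
def Delta (b : ℤ × ℤ) : Set (ℤ × ℤ) := Delta1 b ∪ Delta2 b

/-- A good semigroup `S ⊆ ℕ² ⊆ ℤ²`. -/
structure GoodSemigroup (S : Set (ℤ × ℤ)) : Prop where
  nonneg : ∀ p ∈ S, 0 ≤ p.1 ∧ 0 ≤ p.2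
  zero_mem : ((0, 0) : ℤ × ℤ) ∈ S
  add_mem : ∀ a ∈ S, ∀ b ∈ S, a + b ∈ S
  inf_mem : ∀ a ∈ S, ∀ b ∈ S, ((min a.1 b.1, min a.2 b.2) : ℤ × ℤ) ∈ S
  g2_fst : ∀ a ∈ S, ∀ b ∈ S, a.1 = b.1 → a.2 ≠ b.2 →
      ∃ d ∈ S, a.1 < d.1 ∧ d.2 = min a.2 b.2
  g2_snd : ∀ a ∈ S, ∀ b ∈ S, a.2 = b.2 → a.1 ≠ b.1 →
      ∃ d ∈ S, a.2 < d.2 ∧ d.1 = min a.1 b.1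
  g3 : ∃ c : ℤ × ℤ, ∀ z : ℤ × ℤ, c ≤ z → z ∈ S

/-- `S` is local: `(0,0)` is the only element with a zero component. -/
def IsLocal (S : Set (ℤ × ℤ)) : Prop := ∀ p ∈ S, (p.1 = 0 ∨ p.2 = 0) → p = (0, 0)

/-- `e` is the smallest nonzero element of `S`. -/
def IsMinNonzero (S : Set (ℤ × ℤ)) (e : ℤ × ℤ) : Prop :=
  e ∈ S ∧ e ≠ (0, 0) ∧ ∀ p ∈ S, p ≠ (0, 0) → e ≤ p

/-- `c` is the conductor of `S`: the minimal element with `c + ℕ² ⊆ S`. -/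
def IsConductor (S : Set (ℤ × ℤ)) (c : ℤ × ℤ) : Prop :=
  (∀ z : ℤ × ℤ, c ≤ z → z ∈ S) ∧
  ∀ c' : ℤ × ℤ, (∀ z : ℤ × ℤ, c' ≤ z → z ∈ S) → c ≤ c'

/-- The Apéry set of `S` with respect to `e`. -/
def Ap (S : Set (ℤ × ℤ)) (e : ℤ × ℤ) : Set (ℤ × ℤ) := {a ∈ S | a - e ∉ S}

/-- `S` is symmetric with respect to `γ = c - (1,1)`. -/
def IsSymmetric (S : Set (ℤ × ℤ)) (γ : ℤ × ℤ) : Prop :=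
  ∀ a : ℤ × ℤ, a ∈ S ↔ Delta (γ - a) ∩ S = ∅

/-- `a` is an absolute element of `S`. -/
def Absolute (S : Set (ℤ × ℤ)) (a : ℤ × ℤ) : Prop := a ∈ S ∧ Delta a ∩ S = ∅

/-- The set `e + S`. -/
def shiftSet (S : Set (ℤ × ℤ)) (e : ℤ × ℤ) : Set (ℤ × ℤ) := {a | ∃ s ∈ S, a = e + s}

section Translate

variable {S : Set (ℤ × ℤ)} {e : ℤ × ℤ}

lemma shiftSet_subset (hadd : ∀ a ∈ S, ∀ b ∈ S, a + b ∈ S) (he : e ∈ S) :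
    shiftSet S e ⊆ S := by
  rintro a ⟨s, hs, rfl⟩
  exact hadd e he s hs

lemma shiftSet_add_mem (hadd : ∀ a ∈ S, ∀ b ∈ S, a + b ∈ S) :
    ∀ a ∈ shiftSet S e, ∀ s ∈ S, a + s ∈ shiftSet S e := by
  rintro a ⟨s, hs, rfl⟩ t ht
  exact ⟨s + t, hadd s hs t ht, add_assoc e s t⟩

lemma shiftSet_inf_mem
    (hinf : ∀ a ∈ S, ∀ b ∈ S, ((min a.1 b.1, min a.2 b.2) : ℤ × ℤ) ∈ S) :
    ∀ a ∈ shiftSet S e, ∀ b ∈ shiftSet S e,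
      ((min a.1 b.1, min a.2 b.2) : ℤ × ℤ) ∈ shiftSet S e := by
  rintro a ⟨s, hs, rfl⟩ b ⟨t, ht, rfl⟩
  refine ⟨_, hinf s hs t ht, ?_⟩
  simp only [Prod.fst_add, Prod.snd_add, min_add_add_left]
  rfl

lemma shiftSet_g2_fst
    (hg2 : ∀ a ∈ S, ∀ b ∈ S, a.1 = b.1 → a.2 ≠ b.2 →
      ∃ d ∈ S, a.1 < d.1 ∧ d.2 = min a.2 b.2) :
    ∀ a ∈ shiftSet S e, ∀ b ∈ shiftSet S e, a.1 = b.1 → a.2 ≠ b.2 →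
      ∃ d ∈ shiftSet S e, a.1 < d.1 ∧ d.2 = min a.2 b.2 := by
  rintro a ⟨s, hs, rfl⟩ b ⟨t, ht, rfl⟩ h1 h2
  simp only [Prod.fst_add, Prod.snd_add, add_right_inj, ne_eq] at h1 h2 ⊢
  obtain ⟨d, hd, hd1, hd2⟩ := hg2 s hs t ht h1 h2
  exact ⟨e + d, ⟨d, hd, rfl⟩, by simpa using hd1, by simp [hd2, min_add_add_left]⟩

lemma shiftSet_g2_snd
    (hg2 : ∀ a ∈ S, ∀ b ∈ S, a.2 = b.2 → a.1 ≠ b.1 →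
      ∃ d ∈ S, a.2 < d.2 ∧ d.1 = min a.1 b.1) :
    ∀ a ∈ shiftSet S e, ∀ b ∈ shiftSet S e, a.2 = b.2 → a.1 ≠ b.1 →
      ∃ d ∈ shiftSet S e, a.2 < d.2 ∧ d.1 = min a.1 b.1 := by
  rintro a ⟨s, hs, rfl⟩ b ⟨t, ht, rfl⟩ h1 h2
  simp only [Prod.fst_add, Prod.snd_add, add_right_inj, ne_eq] at h1 h2 ⊢
  obtain ⟨d, hd, hd1, hd2⟩ := hg2 s hs t ht h1 h2
  exact ⟨e + d, ⟨d, hd, rfl⟩, by simpa using hd1, by simp [hd2, min_add_add_left]⟩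

end Translate

theorem shift_good_ideal_general (S : Set (ℤ × ℤ)) (hS : GoodSemigroup S)
    (e : ℤ × ℤ) (he : IsMinNonzero S e) :
    shiftSet S e ⊆ S ∧
    (∀ a ∈ shiftSet S e, ∀ s ∈ S, a + s ∈ shiftSet S e) ∧
    (∀ a ∈ shiftSet S e, ∀ b ∈ shiftSet S e,
      ((min a.1 b.1, min a.2 b.2) : ℤ × ℤ) ∈ shiftSet S e) ∧
    (∀ a ∈ shiftSet S e, ∀ b ∈ shiftSet S e, a.1 = b.1 → a.2 ≠ b.2 →
      ∃ d ∈ shiftSet S e, a.1 < d.1 ∧ d.2 = min a.2 b.2) ∧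
    (∀ a ∈ shiftSet S e, ∀ b ∈ shiftSet S e, a.2 = b.2 → a.1 ≠ b.1 →
      ∃ d ∈ shiftSet S e, a.2 < d.2 ∧ d.1 = min a.1 b.1) :=
  ⟨shiftSet_subset hS.add_mem he.1, shiftSet_add_mem hS.add_mem, shiftSet_inf_mem hS.inf_mem,
    shiftSet_g2_fst hS.g2_fst, shiftSet_g2_snd hS.g2_snd⟩

/-- `e + S` is a good ideal of `S`: an ideal contained in `S` satisfying (G1) and (G2). -/
theorem shift_good_ideal (S : Set (ℤ × ℤ)) (hS : GoodSemigroup S) (hloc : IsLocal S)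
    (e : ℤ × ℤ) (he : IsMinNonzero S e) :
    shiftSet S e ⊆ S ∧
    (∀ a ∈ shiftSet S e, ∀ s ∈ S, a + s ∈ shiftSet S e) ∧
    (∀ a ∈ shiftSet S e, ∀ b ∈ shiftSet S e,
      ((min a.1 b.1, min a.2 b.2) : ℤ × ℤ) ∈ shiftSet S e) ∧
    (∀ a ∈ shiftSet S e, ∀ b ∈ shiftSet S e, a.1 = b.1 → a.2 ≠ b.2 →
      ∃ d ∈ shiftSet S e, a.1 < d.1 ∧ d.2 = min a.2 b.2) ∧
    (∀ a ∈ shiftSet S e, ∀ b ∈ shiftSet S e, a.2 = b.2 → a.1 ≠ b.1 →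
      ∃ d ∈ shiftSet S e, a.2 < d.2 ∧ d.1 = min a.1 b.1) :=
  shift_good_ideal_general S hS e he
end

section
/- Let S ⊆ ℕ² be a local good semigroup with minimal nonzero element e, and let α ∈ Ap(S). If there exists β ∈ (e + S) ∩ Δ₁(α), then Δ₂(α) ∩ S ⊆ Ap(S). Here Δ₁(α) = {β ∈ ℤ² : β₁ = α₁, β₂ > α₂} and Δ₂(α) = {β ∈ ℤ² : β₂ = α₂, β₁ > α₁}. -/
lemma inf_eq_of_mem_Delta2_of_mem_Delta1 {α θ β : ℤ × ℤ} (hθ : θ ∈ Delta2 α)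
    (hβ : β ∈ Delta1 α) : ((min θ.1 β.1, min θ.2 β.2) : ℤ × ℤ) = α := by
  obtain ⟨hθ2, hθ1⟩ := hθ
  obtain ⟨hβ1, hβ2⟩ := hβ
  ext <;> simp only <;> omega

lemma sub_mem_Delta1 {α β : ℤ × ℤ} (e : ℤ × ℤ) (h : β ∈ Delta1 α) : β - e ∈ Delta1 (α - e) :=
  ⟨by simp [h.1], by simpa using h.2⟩

lemma sub_mem_Delta2 {α θ : ℤ × ℤ} (e : ℤ × ℤ) (h : θ ∈ Delta2 α) : θ - e ∈ Delta2 (α - e) :=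
  ⟨by simp [h.1], by simpa using h.2⟩

theorem delta2_subset_ap_general (S : Set (ℤ × ℤ)) (hS : GoodSemigroup S)
    (e : ℤ × ℤ)
    (α : ℤ × ℤ) (hα : α ∈ Ap S e)
    (hβ : ∃ β ∈ shiftSet S e, β ∈ Delta1 α) :
    Delta2 α ∩ S ⊆ Ap S e := by
  rintro θ ⟨hθ, hθS⟩
  refine ⟨hθS, fun hθe => hα.2 ?_⟩
  obtain ⟨β, ⟨s, hs, rfl⟩, hβ⟩ := hβ
  have hsΔ : s ∈ Delta1 (α - e) := by simpa using sub_mem_Delta1 e hβ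
  rw [← inf_eq_of_mem_Delta2_of_mem_Delta1 (sub_mem_Delta2 e hθ) hsΔ]
  exact hS.inf_mem _ hθe _ hs

/-- If `α ∈ Ap(S)` and some `β ∈ (e + S) ∩ Δ₁(α)`, then `Δ₂(α) ∩ S ⊆ Ap(S)`. -/
theorem delta2_subset_ap (S : Set (ℤ × ℤ)) (hS : GoodSemigroup S) (hloc : IsLocal S)
    (e : ℤ × ℤ) (he : IsMinNonzero S e)
    (α : ℤ × ℤ) (hα : α ∈ Ap S e)
    (hβ : ∃ β ∈ shiftSet S e, β ∈ Delta1 α) :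
    Delta2 α ∩ S ⊆ Ap S e :=
  delta2_subset_ap_general S hS e α hα hβ
end

section
/- Let S ⊆ ℕ² be a local good semigroup with minimal nonzero element e. Suppose α ∈ ℕ² is such that Δ₁(α) ∩ S ∩ (e + S) is finite and nonempty, and let δ be its maximum. Then Δ(δ) ∩ S ⊆ Ap(S), where Δ(δ) = Δ₁(δ) ∪ Δ₂(δ). -/
/-! An element `z` of `Δ(δ) ∩ S` with `z - e ∈ S` gives an element of `S ∩ (e + S)` strictly
above `δ` on its vertical line, contradicting the maximality of `δ`. For `z ∈ Δ₁(δ)` this is `z`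
itself; for `z ∈ Δ₂(δ)`, axiom (G2) applied to `δ - e` and `z - e` yields `d ∈ S ∩ Δ₁(δ - e)`, and
`e + d` is the required element. -/

theorem mem_shiftSet_iff {S : Set (ℤ × ℤ)} {e a : ℤ × ℤ} : a ∈ shiftSet S e ↔ a - e ∈ S := by
  constructor
  · rintro ⟨s, hs, rfl⟩
    simpa using hs
  · exact fun h => ⟨a - e, h, by abel⟩

theorem shiftSet_subset_s8 {S : Set (ℤ × ℤ)} (hS : GoodSemigroup S) {e : ℤ × ℤ} (he : e ∈ S) :
    shiftSet S e ⊆ S := by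
  rintro _ ⟨s, hs, rfl⟩
  exact hS.add_mem e he s hs

theorem Delta1.trans {a b c : ℤ × ℤ} (hab : b ∈ Delta1 a) (hbc : c ∈ Delta1 b) : c ∈ Delta1 a :=
  ⟨hbc.1.trans hab.1, hab.2.trans hbc.2⟩

theorem add_mem_Delta1_add {a d : ℤ × ℤ} (e : ℤ × ℤ) (h : d ∈ Delta1 a) :
    e + d ∈ Delta1 (e + a) :=
  ⟨by simp [h.1], by simpa using h.2⟩

theorem sub_mem_Delta2_sub {a b : ℤ × ℤ} (e : ℤ × ℤ) (h : b ∈ Delta2 a) :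
    b - e ∈ Delta2 (a - e) :=
  ⟨by simp [h.1], by simpa using h.2⟩

theorem GoodSemigroup.exists_mem_Delta1_of_mem_Delta2 {S : Set (ℤ × ℤ)} (hS : GoodSemigroup S)
    {a b : ℤ × ℤ} (ha : a ∈ S) (hb : b ∈ S) (hab : b ∈ Delta2 a) : ∃ d ∈ S, d ∈ Delta1 a := by
  obtain ⟨d, hdS, hd2, hd1⟩ := hS.g2_snd a ha b hb hab.1.symm hab.2.ne
  exact ⟨d, hdS, by rw [hd1, min_eq_left hab.2.le], hd2⟩

theorem delta_max_subset_ap_general (S : Set (ℤ × ℤ)) (hS : GoodSemigroup S)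
    (e : ℤ × ℤ) (he : IsMinNonzero S e)
    (α : ℤ × ℤ)
    (δ : ℤ × ℤ) (hδ : δ ∈ Delta1 α ∩ S ∩ shiftSet S e)
    (hmax : ∀ x ∈ Delta1 α ∩ S ∩ shiftSet S e, x ≤ δ) :
    Delta δ ∩ S ⊆ Ap S e := by
  obtain ⟨⟨hδα, -⟩, hδe⟩ := hδ
  have not_above : ∀ w ∈ Delta1 δ, w ∉ shiftSet S e := fun w hw hwe =>
    (hmax w ⟨⟨Delta1.trans hδα hw, shiftSet_subset_s8 hS he.1 hwe⟩, hwe⟩).2.not_gt hw.2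
  rintro z ⟨hzΔ, hzS⟩
  refine ⟨hzS, fun hze => ?_⟩
  rcases hzΔ with hz | hz
  · exact not_above z hz (mem_shiftSet_iff.2 hze)
  · obtain ⟨d, hdS, hd⟩ := hS.exists_mem_Delta1_of_mem_Delta2 (mem_shiftSet_iff.1 hδe) hze
      (sub_mem_Delta2_sub e hz)
    refine not_above (e + d) ?_ ⟨d, hdS, rfl⟩
    simpa using add_mem_Delta1_add e hd

/-- If `Δ₁(α) ∩ S ∩ (e + S)` is finite nonempty with maximum `δ`, then
`Δ(δ) ∩ S ⊆ Ap(S)`. -/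
theorem delta_max_subset_ap (S : Set (ℤ × ℤ)) (hS : GoodSemigroup S) (hloc : IsLocal S)
    (e : ℤ × ℤ) (he : IsMinNonzero S e)
    (α : ℤ × ℤ) (hα : (0 : ℤ × ℤ) ≤ α)
    (hfin : (Delta1 α ∩ S ∩ shiftSet S e).Finite)
    (δ : ℤ × ℤ) (hδ : δ ∈ Delta1 α ∩ S ∩ shiftSet S e)
    (hmax : ∀ x ∈ Delta1 α ∩ S ∩ shiftSet S e, x ≤ δ) :
    Delta δ ∩ S ⊆ Ap S e :=
  delta_max_subset_ap_general S hS e he α δ hδ hmax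
end

section
/- Let S ⊆ ℕ² be a symmetric local good semigroup with γ = c − (1,1) where c is the conductor. If α ∈ S is an absolute element (i.e., Δ(α) ∩ S = ∅), then γ − α ∈ S and γ − α is also an absolute element of S. -/
theorem IsSymmetric.sub_mem_iff {S : Set (ℤ × ℤ)} {γ : ℤ × ℤ} (hsym : IsSymmetric S γ)
    (a : ℤ × ℤ) : γ - a ∈ S ↔ Delta a ∩ S = ∅ := by
  rw [hsym, sub_sub_cancel]

theorem absolute_dual_general (S : Set (ℤ × ℤ))
    (γ : ℤ × ℤ)
    (hsym : IsSymmetric S γ)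
    (α : ℤ × ℤ) (habs : Absolute S α) :
    Absolute S (γ - α) :=
  ⟨(hsym.sub_mem_iff α).mpr habs.2, (hsym α).mp habs.1⟩

/-- In a symmetric good semigroup, `α ↦ γ - α` sends absolute elements to
absolute elements. -/
theorem absolute_dual (S : Set (ℤ × ℤ)) (hS : GoodSemigroup S) (hloc : IsLocal S)
    (c γ : ℤ × ℤ) (hc : IsConductor S c) (hγ : γ = c - (1, 1))
    (hsym : IsSymmetric S γ)
    (α : ℤ × ℤ) (habs : Absolute S α) :
    Absolute S (γ - α) :=
  absolute_dual_general S γ hsym α habs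
end

section
/- Let S ⊆ ℕ² be a symmetric local good semigroup with minimal nonzero element e, conductor c, and γ = c − (1,1). Then for α ∈ S: α ∈ Ap(S) if and only if Δ(γ + e − α) ∩ S ≠ ∅. -/
theorem IsSymmetric.notMem_iff_delta_nonempty {S : Set (ℤ × ℤ)} {γ : ℤ × ℤ}
    (hsym : IsSymmetric S γ) (a : ℤ × ℤ) : a ∉ S ↔ (Delta (γ - a) ∩ S).Nonempty := by
  rw [hsym a, Set.nonempty_iff_ne_empty]

theorem mem_Ap_iff_sub_notMem {S : Set (ℤ × ℤ)} {e a : ℤ × ℤ} (ha : a ∈ S) :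
    a ∈ Ap S e ↔ a - e ∉ S :=
  and_iff_right ha

theorem ap_iff_delta_nonempty_general (S : Set (ℤ × ℤ))
    (e γ : ℤ × ℤ) (hsym : IsSymmetric S γ)
    (α : ℤ × ℤ) (hα : α ∈ S) :
    α ∈ Ap S e ↔ (Delta (γ + e - α) ∩ S).Nonempty := by
  rw [mem_Ap_iff_sub_notMem hα, hsym.notMem_iff_delta_nonempty, sub_sub_eq_add_sub]

/-- For `α ∈ S`: `α ∈ Ap(S)` iff `Δ(γ + e - α) ∩ S ≠ ∅`. -/
theorem ap_iff_delta_nonempty (S : Set (ℤ × ℤ)) (hS : GoodSemigroup S) (hloc : IsLocal S)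
    (e c γ : ℤ × ℤ) (he : IsMinNonzero S e) (hc : IsConductor S c)
    (hγ : γ = c - (1, 1)) (hsym : IsSymmetric S γ)
    (α : ℤ × ℤ) (hα : α ∈ S) :
    α ∈ Ap S e ↔ (Delta (γ + e - α) ∩ S).Nonempty :=
  ap_iff_delta_nonempty_general S e γ hsym α hα
end

section
/- Let S ⊆ ℕ² be a symmetric local good semigroup with minimal nonzero element e, conductor c, and γ = c − (1,1). If α ∈ Ap(S), then Δ(γ + e − α) ∩ S ⊆ Ap(S). -/
theorem sub_mem_Delta_iff (d b v : ℤ × ℤ) : d - v ∈ Delta b ↔ d ∈ Delta (b + v) := by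
  simp only [Delta, Delta1, Delta2, Set.mem_union, Set.mem_ofPred_eq, Prod.fst_sub, Prod.snd_sub,
    Prod.fst_add, Prod.snd_add]
  omega

theorem IsSymmetric.notMem_of_mem_Delta {S : Set (ℤ × ℤ)} {γ a d : ℤ × ℤ}
    (hsym : IsSymmetric S γ) (ha : a ∈ S) (hd : d ∈ Delta (γ - a)) : d ∉ S := fun hdS =>
  Set.eq_empty_iff_forall_notMem.mp ((hsym a).mp ha) d ⟨hd, hdS⟩

theorem delta_dual_subset_ap_general (S : Set (ℤ × ℤ))
    (e γ : ℤ × ℤ) (hsym : IsSymmetric S γ)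
    (α : ℤ × ℤ) (hα : α ∈ Ap S e) :
    Delta (γ + e - α) ∩ S ⊆ Ap S e := by
  rintro β ⟨hβΔ, hβS⟩
  refine ⟨hβS, hsym.notMem_of_mem_Delta hα.1 ?_⟩
  rw [sub_mem_Delta_iff, sub_add_eq_add_sub]
  exact hβΔ

/-- If `α ∈ Ap(S)`, then `Δ(γ + e - α) ∩ S ⊆ Ap(S)`. -/
theorem delta_dual_subset_ap (S : Set (ℤ × ℤ)) (hS : GoodSemigroup S) (hloc : IsLocal S)
    (e c γ : ℤ × ℤ) (he : IsMinNonzero S e) (hc : IsConductor S c)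
    (hγ : γ = c - (1, 1)) (hsym : IsSymmetric S γ)
    (α : ℤ × ℤ) (hα : α ∈ Ap S e) :
    Delta (γ + e - α) ∩ S ⊆ Ap S e :=
  delta_dual_subset_ap_general S e γ hsym α hα
end

section
/- Let S ⊆ ℕ² be a symmetric local good semigroup with minimal nonzero element e, conductor c, γ = c − (1,1). For α ∈ ℕ²: if Δ(α) ∩ S ⊆ Ap(S) (possibly Δ(α) ∩ S is empty), then γ + e − α ∈ S. -/
theorem add_mem_Delta_add {b d : ℤ × ℤ} (v : ℤ × ℤ) (hd : d ∈ Delta b) :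
    d + v ∈ Delta (b + v) := by
  rcases hd with ⟨h1, h2⟩ | ⟨h2, h1⟩
  · exact Or.inl ⟨by simp [h1], by simp; omega⟩
  · exact Or.inr ⟨by simp [h2], by simp; omega⟩

theorem IsSymmetric.nonempty_Delta_inter_of_notMem {S : Set (ℤ × ℤ)} {γ a : ℤ × ℤ}
    (hsym : IsSymmetric S γ) (ha : a ∉ S) : (Delta (γ - a) ∩ S).Nonempty :=
  Set.nonempty_iff_ne_empty.mpr fun h => ha ((hsym a).mpr h)

theorem dual_mem_of_delta_subset_ap_general (S : Set (ℤ × ℤ)) (hS : GoodSemigroup S)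
    (e γ : ℤ × ℤ) (he : IsMinNonzero S e) (hsym : IsSymmetric S γ)
    (α : ℤ × ℤ)
    (h : Delta α ∩ S ⊆ Ap S e) :
    γ + e - α ∈ S := by
  by_contra hmem
  obtain ⟨s, hsΔ, hsS⟩ := hsym.nonempty_Delta_inter_of_notMem hmem
  have hsΔ' : s ∈ Delta (α - e) := by rwa [show γ - (γ + e - α) = α - e by abel] at hsΔ
  have hseΔ : s + e ∈ Delta α := by simpa using add_mem_Delta_add e hsΔ'
  have hseAp : s + e ∈ Ap S e := h ⟨hseΔ, hS.add_mem s hsS e he.1⟩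
  exact hseAp.2 (by simpa using hsS)

/-- If `Δ(α) ∩ S ⊆ Ap(S)` (possibly empty), then `γ + e - α ∈ S`. -/
theorem dual_mem_of_delta_subset_ap (S : Set (ℤ × ℤ)) (hS : GoodSemigroup S)
    (hloc : IsLocal S)
    (e c γ : ℤ × ℤ) (he : IsMinNonzero S e) (hc : IsConductor S c)
    (hγ : γ = c - (1, 1)) (hsym : IsSymmetric S γ)
    (α : ℤ × ℤ) (hα : (0 : ℤ × ℤ) ≤ α)
    (h : Delta α ∩ S ⊆ Ap S e) :
    γ + e - α ∈ S :=
  dual_mem_of_delta_subset_ap_general S hS e γ he hsym α h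
end

section
/- Let S ⊆ ℕ² be a symmetric local good semigroup with minimal element e, conductor c, γ = c − (1,1), and let α ∈ Ap(S). Then for i ∈ {1,2}: Δᵢ(γ + e − α) ∩ S = ∅ if and only if Δᵢ(α) ∩ S ⊄ Ap(S) (i.e., Δᵢ(α) ∩ S contains an element of e + S). -/
open Set

section Delta

theorem delta1_subset_delta1 {a b : ℤ × ℤ} (h₁ : a.1 = b.1) (h₂ : a.2 ≤ b.2) :
    Delta1 b ⊆ Delta1 a :=
  fun _ ⟨hd₁, hd₂⟩ => ⟨hd₁.trans h₁.symm, h₂.trans_lt hd₂⟩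

theorem delta2_subset_delta2 {a b : ℤ × ℤ} (h₂ : a.2 = b.2) (h₁ : a.1 ≤ b.1) :
    Delta2 b ⊆ Delta2 a :=
  fun _ ⟨hd₂, hd₁⟩ => ⟨hd₂.trans h₂.symm, h₁.trans_lt hd₁⟩

theorem delta_inter_eq_empty_iff {b : ℤ × ℤ} {S : Set (ℤ × ℤ)} :
    Delta b ∩ S = ∅ ↔ Delta1 b ∩ S = ∅ ∧ Delta2 b ∩ S = ∅ := by
  rw [Delta, union_inter_distrib_right, union_empty_iff]

theorem delta1_swap (b : ℤ × ℤ) : Delta1 b.swap = Prod.swap ⁻¹' Delta2 b := rfl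

theorem delta2_swap (b : ℤ × ℤ) : Delta2 b.swap = Prod.swap ⁻¹' Delta1 b := rfl

theorem delta_swap (b : ℤ × ℤ) : Delta b.swap = Prod.swap ⁻¹' Delta b := by
  rw [Delta, Delta, delta1_swap, delta2_swap, union_comm, preimage_union]

end Delta

theorem preimage_swap_eq_empty_iff {α β : Type*} {s : Set (α × β)} :
    Prod.swap ⁻¹' s = ∅ ↔ s = ∅ :=
  Prod.swap_surjective.preimage_injective.eq_iff' preimage_empty

section Swap

variable {S : Set (ℤ × ℤ)}

theorem ap_swap (e : ℤ × ℤ) : Ap (Prod.swap ⁻¹' S) e.swap = Prod.swap ⁻¹' Ap S e := rfl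

theorem GoodSemigroup.swap (hS : GoodSemigroup S) : GoodSemigroup (Prod.swap ⁻¹' S) where
  nonneg p hp := (hS.nonneg _ hp).symm
  zero_mem := hS.zero_mem
  add_mem a ha b hb := hS.add_mem _ ha _ hb
  inf_mem a ha b hb := hS.inf_mem _ ha _ hb
  g2_fst a ha b hb h₁ h₂ := by
    obtain ⟨d, hd, hd₂, hd₁⟩ := hS.g2_snd _ ha _ hb h₁ h₂
    exact ⟨d.swap, hd, hd₂, hd₁⟩
  g2_snd a ha b hb h₂ h₁ := by
    obtain ⟨d, hd, hd₁, hd₂⟩ := hS.g2_fst _ ha _ hb h₂ h₁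
    exact ⟨d.swap, hd, hd₁, hd₂⟩
  g3 := by
    obtain ⟨c, hc⟩ := hS.g3
    exact ⟨c.swap, fun z hz => hc _ (Prod.swap_le_swap.mpr hz)⟩

theorem IsSymmetric.swap {γ : ℤ × ℤ} (hsym : IsSymmetric S γ) :
    IsSymmetric (Prod.swap ⁻¹' S) γ.swap := fun a => by
  rw [mem_preimage, hsym a.swap, show γ.swap - a = (γ - a.swap).swap from rfl, delta_swap,
    ← preimage_inter, preimage_swap_eq_empty_iff]

end Swap

section Dual

variable {S : Set (ℤ × ℤ)} {γ e α : ℤ × ℤ}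

theorem GoodSemigroup.delta1_inter_nonempty (hS : GoodSemigroup S) {b t : ℤ × ℤ} (hb : b ∈ S)
    (ht : t ∈ Delta2 b ∩ S) : (Delta1 b ∩ S).Nonempty := by
  obtain ⟨⟨ht₂, ht₁⟩, htS⟩ := ht
  obtain ⟨d, hdS, hd₂, hd₁⟩ := hS.g2_snd b hb t htS ht₂.symm ht₁.ne
  exact ⟨d, ⟨hd₁.trans (min_eq_left ht₁.le), hd₂⟩, hdS⟩

theorem delta1_dual_inter_eq_empty_of_not_subset_ap (hsym : IsSymmetric S γ)
    (h : ¬ Delta1 α ∩ S ⊆ Ap S e) : Delta1 (γ + e - α) ∩ S = ∅ := by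
  obtain ⟨δ, ⟨⟨hδ₁, hδ₂⟩, hδS⟩, hδ⟩ := not_subset.mp h
  have hδe : δ - e ∈ S := by_contra fun hδe => hδ ⟨hδS, hδe⟩
  have hsub : Delta1 (γ + e - α) ⊆ Delta (γ - (δ - e)) := by
    refine (delta1_subset_delta1 ?_ ?_).trans subset_union_left <;>
      simp only [Prod.fst_sub, Prod.fst_add, Prod.snd_sub, Prod.snd_add, hδ₁]
    · abel
    · omega
  exact subset_eq_empty (inter_subset_inter_left S hsub) ((hsym _).mp hδe)

theorem not_subset_ap_of_delta1_dual_inter_eq_empty (hS : GoodSemigroup S)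
    (hsym : IsSymmetric S γ) (he : e ∈ S) (hα : α ∈ Ap S e)
    (h : Delta1 (γ + e - α) ∩ S = ∅) : ¬ Delta1 α ∩ S ⊆ Ap S e := by
  intro hAp
  obtain ⟨t, ⟨ht₂, ht₁⟩, htS⟩ : (Delta2 (γ + e - α) ∩ S).Nonempty := by
    refine nonempty_iff_ne_empty.mpr fun h₂ => hα.2 ((hsym _).mpr ?_)
    rw [show γ - (α - e) = γ + e - α by abel]
    exact delta_inter_eq_empty_iff.mpr ⟨h, h₂⟩
  have h₁ : Delta1 (α - e) ∩ S = ∅ := by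
    refine eq_empty_of_forall_notMem fun σ ⟨⟨hσ₁, hσ₂⟩, hσS⟩ => ?_
    simp only [Prod.fst_sub, Prod.snd_sub] at hσ₁ hσ₂
    have hAp := hAp ⟨⟨by simp only [Prod.fst_add]; omega, by simp only [Prod.snd_add]; omega⟩,
      hS.add_mem e he σ hσS⟩
    exact hAp.2 (by rwa [add_sub_cancel_left])
  have h₂ : Delta2 (α - e) ∩ S = ∅ := by
    refine subset_eq_empty (inter_subset_inter_left S ?_) ((hsym t).mp htS)
    refine (delta2_subset_delta2 ?_ ?_).trans subset_union_right <;>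
      simp only [Prod.fst_sub, Prod.fst_add, Prod.snd_sub, Prod.snd_add, ht₂] at ht₁ ⊢
    · abel
    · omega
  have hβ : γ + e - α ∈ S := by
    rw [hsym, show γ - (γ + e - α) = α - e by abel, delta_inter_eq_empty_iff]
    exact ⟨h₁, h₂⟩
  exact (hS.delta1_inter_nonempty hβ ⟨⟨ht₂, ht₁⟩, htS⟩).ne_empty h

theorem delta1_dual_inter_eq_empty_iff (hS : GoodSemigroup S) (hsym : IsSymmetric S γ)
    (he : e ∈ S) (hα : α ∈ Ap S e) :
    Delta1 (γ + e - α) ∩ S = ∅ ↔ ¬ Delta1 α ∩ S ⊆ Ap S e :=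
  ⟨not_subset_ap_of_delta1_dual_inter_eq_empty hS hsym he hα,
    delta1_dual_inter_eq_empty_of_not_subset_ap hsym⟩

end Dual

theorem delta_i_dual_empty_iff_general (S : Set (ℤ × ℤ)) (hS : GoodSemigroup S)
    (e γ : ℤ × ℤ) (he : IsMinNonzero S e) (hsym : IsSymmetric S γ)
    (α : ℤ × ℤ) (hα : α ∈ Ap S e) :
    (Delta1 (γ + e - α) ∩ S = ∅ ↔ ¬ (Delta1 α ∩ S ⊆ Ap S e)) ∧
    (Delta2 (γ + e - α) ∩ S = ∅ ↔ ¬ (Delta2 α ∩ S ⊆ Ap S e)) := by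
  refine ⟨delta1_dual_inter_eq_empty_iff hS hsym he.1 hα, ?_⟩
  have hswap := delta1_dual_inter_eq_empty_iff hS.swap hsym.swap (e := e.swap) he.1
    (α := α.swap) hα
  rwa [← Prod.swap_add, ← Prod.swap_sub, delta1_swap, delta1_swap, ap_swap, ← preimage_inter,
    ← preimage_inter, preimage_swap_eq_empty_iff,
    Prod.swap_surjective.preimage_subset_preimage_iff] at hswap

/-- For `α ∈ Ap(S)` and `i ∈ {1,2}`: `Δᵢ(γ + e - α) ∩ S = ∅` iff
`Δᵢ(α) ∩ S ⊄ Ap(S)`. -/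
theorem delta_i_dual_empty_iff (S : Set (ℤ × ℤ)) (hS : GoodSemigroup S)
    (hloc : IsLocal S)
    (e c γ : ℤ × ℤ) (he : IsMinNonzero S e) (hc : IsConductor S c)
    (hγ : γ = c - (1, 1)) (hsym : IsSymmetric S γ)
    (α : ℤ × ℤ) (hα : α ∈ Ap S e) :
    (Delta1 (γ + e - α) ∩ S = ∅ ↔ ¬ (Delta1 α ∩ S ⊆ Ap S e)) ∧
    (Delta2 (γ + e - α) ∩ S = ∅ ↔ ¬ (Delta2 α ∩ S ⊆ Ap S e)) :=
  delta_i_dual_empty_iff_general S hS e γ he hsym α hα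
end

section
/- Let S ⊆ ℕ² be a symmetric local good semigroup with conductor c, γ = c − (1,1), and first projection S₁ (a numerical semigroup). For n ∈ ℕ: the set {m ∈ ℕ : (n, m) ∈ S} is empty if and only if the set {m ∈ ℕ : (γ₁ − n, m) ∈ S} is infinite (equivalently, contains all m ≥ γ₂ + 1). -/
/-!
Symmetry says `(n, m) ∈ S` exactly when no point of `S` lies strictly above or strictly to the
right of `(γ₁ - n, γ₂ - m)`. A point `(n, m₀) ∈ S` therefore caps the column over `γ₁ - n` at
`γ₂ - m₀`, so that column is finite. Conversely, if the column over `n` is empty, then for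
`m > γ₂` nothing of `S` lies above `(n, γ₂ - m)`, and nothing lies to its right since its
ordinate is negative; so `(γ₁ - n, m) ∈ S` for all `m > γ₂`.
-/

namespace IsSymmetric

variable {S : Set (ℤ × ℤ)} {γ : ℤ × ℤ}

theorem notMem_of_lt (hsym : IsSymmetric S γ) {n m t : ℤ} (h : (n, m) ∈ S)
    (ht : γ.2 - m < t) : (γ.1 - n, t) ∉ S := fun ht' =>
  ((hsym (n, m)).1 h).subset
    ⟨show (γ.1 - n, t) ∈ Delta (γ - (n, m)) from Or.inl ⟨rfl, ht⟩, ht'⟩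

theorem dual_column_finite (hsym : IsSymmetric S γ) (hnonneg : ∀ p ∈ S, 0 ≤ p.2) {n m : ℤ}
    (h : (n, m) ∈ S) : {t : ℤ | (γ.1 - n, t) ∈ S}.Finite :=
  (Set.finite_Icc 0 (γ.2 - m)).subset fun _ ht =>
    ⟨hnonneg _ ht, not_lt.1 fun hlt => hsym.notMem_of_lt h hlt ht⟩

theorem mem_of_column_empty (hsym : IsSymmetric S γ) (hnonneg : ∀ p ∈ S, 0 ≤ p.2) {n m : ℤ}
    (hempty : ∀ t, (n, t) ∉ S) (hm : γ.2 < m) : (γ.1 - n, m) ∈ S := by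
  refine (hsym _).2 (Set.eq_empty_of_forall_notMem ?_)
  rintro ⟨d₁, d₂⟩ ⟨⟨hd₁, -⟩ | ⟨hd₂, -⟩, hd⟩
  · obtain rfl : d₁ = n := by simpa using hd₁
    exact hempty d₂ hd
  · have hd₂ : d₂ = γ.2 - m := by simpa using hd₂
    have : 0 ≤ d₂ := hnonneg _ hd
    omega

theorem dual_column_infinite (hsym : IsSymmetric S γ) (hnonneg : ∀ p ∈ S, 0 ≤ p.2) {n : ℤ}
    (hempty : ∀ t, (n, t) ∉ S) : {t : ℤ | (γ.1 - n, t) ∈ S}.Infinite :=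
  (Set.Ioi_infinite γ.2).mono fun _ hm => hsym.mem_of_column_empty hnonneg hempty hm

end IsSymmetric

theorem column_empty_iff_dual_infinite_general (S : Set (ℤ × ℤ)) (hS : GoodSemigroup S)
    (γ : ℤ × ℤ)
    (hsym : IsSymmetric S γ)
    (n : ℤ) :
    {m : ℤ | 0 ≤ m ∧ (n, m) ∈ S} = ∅ ↔
      ({m : ℤ | (γ.1 - n, m) ∈ S}).Infinite := by
  have hnonneg : ∀ p ∈ S, 0 ≤ p.2 := fun p hp => (hS.nonneg p hp).2
  constructor
  · intro hempty
    exact hsym.dual_column_infinite hnonneg fun t ht =>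
      (Set.eq_empty_iff_forall_notMem.1 hempty t) ⟨hnonneg _ ht, ht⟩
  · intro hinf
    exact Set.eq_empty_of_forall_notMem fun m ⟨_, hm⟩ => hinf (hsym.dual_column_finite hnonneg hm)

/-- In a symmetric good semigroup, the column over `n` is empty iff the column
over `γ₁ - n` is infinite. -/
theorem column_empty_iff_dual_infinite (S : Set (ℤ × ℤ)) (hS : GoodSemigroup S)
    (hloc : IsLocal S)
    (c γ : ℤ × ℤ) (hc : IsConductor S c) (hγ : γ = c - (1, 1))
    (hsym : IsSymmetric S γ)
    (n : ℤ) (hn : 0 ≤ n) :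
    {m : ℤ | 0 ≤ m ∧ (n, m) ∈ S} = ∅ ↔
      ({m : ℤ | (γ.1 - n, m) ∈ S}).Infinite :=
  column_empty_iff_dual_infinite_general S hS γ hsym n
end

section
/- Let S ⊆ ℕ² be a symmetric local good semigroup with conductor c and γ = c − (1,1). Then the map α ↦ γ − α is a bijection from the set of absolute elements of S to itself, and it is an involution. -/
theorem IsSymmetric.absolute_iff {S : Set (ℤ × ℤ)} {γ : ℤ × ℤ} (hsym : IsSymmetric S γ)
    (a : ℤ × ℤ) : Absolute S a ↔ a ∈ S ∧ γ - a ∈ S := by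
  rw [Absolute, hsym (γ - a), sub_sub_cancel]

theorem IsSymmetric.absolute_sub {S : Set (ℤ × ℤ)} {γ a : ℤ × ℤ} (hsym : IsSymmetric S γ)
    (ha : Absolute S a) : Absolute S (γ - a) := by
  rw [hsym.absolute_iff, sub_sub_cancel]
  exact ((hsym.absolute_iff a).1 ha).symm

theorem absolute_bijection_general (S : Set (ℤ × ℤ)) (γ : ℤ × ℤ)
    (hsym : IsSymmetric S γ) :
    Set.BijOn (fun a => γ - a) {a | Absolute S a} {a | Absolute S a} ∧
    ∀ a : ℤ × ℤ, γ - (γ - a) = a := by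
  have hmaps : Set.MapsTo (fun a => γ - a) {a | Absolute S a} {a | Absolute S a} :=
    fun _ ha => hsym.absolute_sub ha
  have hinv : Set.InvOn (fun a => γ - a) (fun a => γ - a) {a | Absolute S a}
      {a | Absolute S a} :=
    ⟨fun a _ => sub_sub_cancel γ a, fun a _ => sub_sub_cancel γ a⟩
  exact ⟨hinv.bijOn hmaps hmaps, sub_sub_cancel γ⟩

/-- In a symmetric good semigroup, `α ↦ γ - α` is an involutive bijection of the
set of absolute elements onto itself. -/
theorem absolute_bijection (S : Set (ℤ × ℤ)) (hS : GoodSemigroup S) (hloc : IsLocal S)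
    (c γ : ℤ × ℤ) (hc : IsConductor S c) (hγ : γ = c - (1, 1))
    (hsym : IsSymmetric S γ) :
    Set.BijOn (fun a => γ - a) {a | Absolute S a} {a | Absolute S a} ∧
    ∀ a : ℤ × ℤ, γ - (γ - a) = a :=
  absolute_bijection_general S γ hsym
end

section
/- Let S ⊆ ℕ² be a local good semigroup with minimal nonzero element e = (e₁, e₂) and let S₁ be its first projection. For every n ∈ ℕ with n ≥ c₁ (first coordinate of the conductor), there exists exactly one m ∈ ℕ with m ≡ n (mod e₁) such that the vertical line {(m, r) : r ∈ ℕ} is eventually contained in Ap(S) (i.e., there is r₀ with (m, r) ∈ Ap(S) for all r ≥ r₀). -/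
/-!
Above the height `c₂` a vertical line lies entirely in `S` or misses it entirely: taking infima
with points of the conductor region moves down along the line, and axiom (G2) followed by an
infimum moves up. Hence the set `L` of abscissae whose lines are eventually in `S` is the right
object: it contains `[c₁, ∞)`, lies in `[0, ∞)` and is stable under `+ e₁` because `e ∈ S`. The line
at `m` is eventually in `Ap(S)` exactly when `m ∈ L` and `m - e₁ ∉ L`, and in each residue class
modulo `e₁ > 0` this singles out the least element of `L` in that class.
-/

open Filter

namespace Int

variable {L : Set ℤ} {d : ℤ}

lemma add_mul_mem_of_add_mem (hL : ∀ x ∈ L, x + d ∈ L) {x : ℤ} (hx : x ∈ L) (k : ℕ) :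
    x + k * d ∈ L := by
  induction k with
  | zero => simpa using hx
  | succ k ih => simpa [add_mul, add_assoc] using hL _ ih

lemma le_of_modEq_of_sub_notMem (hd : 0 < d) (hL : ∀ x ∈ L, x + d ∈ L) {m a : ℤ}
    (hm : m - d ∉ L) (ha : a ∈ L) (hma : a ≡ m [ZMOD d]) : m ≤ a := by
  by_contra! ham
  obtain ⟨k, hk⟩ := hma.dvd
  have hk1 : 1 ≤ k := by nlinarith
  have hmd : m - d = a + (k - 1) * d := by linear_combination hk
  have := add_mul_mem_of_add_mem hL ha (k - 1).toNat
  rw [Int.toNat_of_nonneg (by lia)] at this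
  exact hm (hmd ▸ this)

/-- The witness is the least element of `L` congruent to `n`. -/
theorem existsUnique_modEq_mem_sub_notMem (hd : 0 < d) (hL : ∀ x ∈ L, x + d ∈ L)
    (hbdd : BddBelow L) {n : ℤ} (hn : n ∈ L) :
    ∃! m : ℤ, m ≡ n [ZMOD d] ∧ m ∈ L ∧ m - d ∉ L := by
  obtain ⟨b, hb⟩ := hbdd
  obtain ⟨m, ⟨hmn, hmL⟩, hleast⟩ :=
    Int.exists_least_of_bdd (P := fun m => m ≡ n [ZMOD d] ∧ m ∈ L)
    ⟨b, fun z hz => hb hz.2⟩ ⟨n, rfl, hn⟩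
  refine ⟨m, ⟨hmn, hmL, fun hm => ?_⟩, fun m' ⟨hm'n, hm'L, hm'⟩ => le_antisymm ?_ ?_⟩
  · have := hleast (m - d) ⟨(Int.modEq_iff_dvd.2 ⟨1, by ring⟩).trans hmn, hm⟩
    lia
  · exact le_of_modEq_of_sub_notMem hd hL hm' hmL (hmn.trans hm'n.symm)
  · exact hleast m' ⟨hm'n, hm'L⟩

end Int

namespace GoodSemigroup

variable {S : Set (ℤ × ℤ)} {c : ℤ × ℤ} {x r r' : ℤ}

lemma fst_pos_of_isLocal (hS : GoodSemigroup S) (hloc : IsLocal S) {e : ℤ × ℤ} (he : e ∈ S)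
    (he0 : e ≠ (0, 0)) : 0 < e.1 :=
  (hS.nonneg e he).1.lt_of_ne fun h => he0 (hloc e he (.inl h.symm))

lemma mem_mk_of_mem_of_le (hS : GoodSemigroup S) (hc : ∀ z, c ≤ z → z ∈ S)
    (hx : (x, r) ∈ S) (hr' : c.2 ≤ r') (h : r' ≤ r) : (x, r') ∈ S := by
  have hb : (max x c.1, r') ∈ S := hc _ ⟨le_max_right _ _, hr'⟩
  simpa [min_eq_right h] using hS.inf_mem _ hx _ hb

lemma mem_mk_add_one (hS : GoodSemigroup S) (hc : ∀ z, c ≤ z → z ∈ S)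
    (hx : (x, r) ∈ S) (hr : c.2 ≤ r) : (x, r + 1) ∈ S := by
  -- (G2) for `(x, r)` and a point of `S` to its right at the same height gives a point of `S`
  -- strictly above `(x, r)`; then go down again.
  have hb : (max x c.1 + 1, r) ∈ S := hc _ ⟨by lia, hr⟩
  obtain ⟨d, hd, hrd, hd1⟩ := hS.g2_snd _ hx _ hb rfl (by lia)
  have hd1 : d.1 = x :=
    hd1.trans (min_eq_left ((le_max_left x c.1).trans (le_add_of_nonneg_right zero_le_one)))
  exact hd1 ▸ hS.mem_mk_of_mem_of_le hc hd (by lia) (by simpa using hrd)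

lemma mem_mk_of_mem (hS : GoodSemigroup S) (hc : ∀ z, c ≤ z → z ∈ S)
    (hx : (x, r) ∈ S) (hr : c.2 ≤ r) (hr' : c.2 ≤ r') : (x, r') ∈ S := by
  rcases le_total r' r with h | h
  · exact hS.mem_mk_of_mem_of_le hc hx hr' h
  · induction r', h using Int.leInduction with
    | base => exact hx
    | succ n hrn ih => exact hS.mem_mk_add_one hc (ih (hr.trans hrn)) (hr.trans hrn)

lemma mem_mk_iff_eventually_mem (hS : GoodSemigroup S) (hc : ∀ z, c ≤ z → z ∈ S)
    (hr : c.2 ≤ r) : (x, r) ∈ S ↔ ∀ᶠ r' in atTop, (x, r') ∈ S := by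
  refine ⟨fun hx => eventually_atTop.2 ⟨c.2, fun r' hr' => hS.mem_mk_of_mem hc hx hr hr'⟩,
    fun h => ?_⟩
  obtain ⟨r₀, hr₀⟩ := eventually_atTop.1 h
  exact hS.mem_mk_of_mem hc (hr₀ _ (le_max_left r₀ c.2)) (le_max_right _ _) hr

lemma eventually_mem_add_fst (hS : GoodSemigroup S) {e : ℤ × ℤ} (he : e ∈ S)
    (hx : ∀ᶠ r in atTop, (x, r) ∈ S) : ∀ᶠ r in atTop, (x + e.1, r) ∈ S := by
  refine ((tendsto_atTop_add_const_right atTop (-e.2) tendsto_id).eventually hx).mono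
    fun r hr => ?_
  convert hS.add_mem e he _ hr using 1
  ext <;> simp [add_comm]

lemma eventually_mem_ap_iff (hS : GoodSemigroup S) (hc : ∀ z, c ≤ z → z ∈ S) (e : ℤ × ℤ) :
    (∀ᶠ r in atTop, (x, r) ∈ Ap S e) ↔
      (∀ᶠ r in atTop, (x, r) ∈ S) ∧ ¬ ∀ᶠ r in atTop, (x - e.1, r) ∈ S := by
  have hshift : ∀ᶠ r in atTop,
      (x - e.1, r - e.2) ∉ S ↔ ¬ ∀ᶠ r' in atTop, (x - e.1, r') ∈ S :=
    (eventually_ge_atTop (c.2 + e.2)).mono fun r hr =>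
      (hS.mem_mk_iff_eventually_mem hc (by lia)).not
  rw [← eventually_const (f := (atTop : Filter ℤ)) (p := ¬ ∀ᶠ r' in atTop, (x - e.1, r') ∈ S),
    ← eventually_congr hshift, ← eventually_and]
  rfl

end GoodSemigroup

/-- For every `n ≥ c₁` there is exactly one `m ≡ n (mod e₁)` whose vertical line
is eventually contained in `Ap(S)`. -/
theorem unique_vertical_line_mod (S : Set (ℤ × ℤ)) (hS : GoodSemigroup S)
    (hloc : IsLocal S)
    (e c : ℤ × ℤ) (he : IsMinNonzero S e) (hc : IsConductor S c) :
    ∀ n : ℤ, c.1 ≤ n →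
      ∃! m : ℤ, 0 ≤ m ∧ m ≡ n [ZMOD e.1] ∧
        ∃ r₀ : ℤ, ∀ r : ℤ, r₀ ≤ r → ((m, r) : ℤ × ℤ) ∈ Ap S e := by
  intro n hn
  set L : Set ℤ := {x | ∀ᶠ r in atTop, (x, r) ∈ S}
  have hL : ∀ x ∈ L, x + e.1 ∈ L := fun x hx => hS.eventually_mem_add_fst he.1 hx
  have hL_nonneg : ∀ x ∈ L, 0 ≤ x := fun x hx =>
    let ⟨_, hxr⟩ := hx.exists
    (hS.nonneg _ hxr).1
  have hnL : n ∈ L := eventually_atTop.2 ⟨c.2, fun r hr => hc.1 _ ⟨hn, hr⟩⟩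
  obtain ⟨m, ⟨hmn, hmL, hm⟩, huniq⟩ := Int.existsUnique_modEq_mem_sub_notMem
    (hS.fst_pos_of_isLocal hloc he.1 he.2.1) hL ⟨0, hL_nonneg⟩ hnL
  refine ⟨m, ⟨hL_nonneg m hmL, hmn, ?_⟩, fun m' ⟨_, hm'n, hm'⟩ => huniq m' ⟨hm'n, ?_⟩⟩
  · exact eventually_atTop.1 ((hS.eventually_mem_ap_iff hc.1 e).2 ⟨hmL, hm⟩)
  · exact (hS.eventually_mem_ap_iff hc.1 e).1 (eventually_atTop.2 hm')
end

section
/- Let S ⊆ ℕ² be a symmetric local good semigroup with first and second projections S₁, S₂ (numerical semigroups), conductor c, γ = c − (1,1). Then n(S₁) − b(S₁) = n(S₂) − b(S₂), where n(Sᵢ) = |Sᵢ ∩ {0, 1, …, γᵢ}| and b(Sᵢ) = |ℕ \ Sᵢ|; moreover this common value equals the number of absolute elements of S. -/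
/-! Above the row `γ₂` symmetry makes the column over `x` full exactly when the column over
`γ₁ - x` is empty, so every `x ∉ S₁` has `γ₁ - x ∈ S₁`. Hence `S₁ ∩ [0, γ₁]` consists of the
reflections `γ₁ - x` of the gaps together with the `x` for which both `x` and `γ₁ - x` lie in
`S₁`. The latter are exactly the first coordinates of the absolute elements, one per column:
the top of a bounded column is absolute by the good-semigroup axiom. Swapping the coordinates
gives the same count for `S₂`. -/

open Set

theorem ncard_sub_ncard_gaps_eq {A : Set ℤ} {g : ℤ} (hA : ∀ x ∈ A, 0 ≤ x)
    (hrefl : ∀ x, g - x ∉ A → x ∈ A) :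
    ({x | x ∈ A ∧ 0 ≤ x ∧ x ≤ g}.ncard : ℤ) - {x | 0 ≤ x ∧ x ∉ A}.ncard =
      {x | x ∈ A ∧ g - x ∈ A}.ncard := by
  set P := {x | x ∈ A ∧ g - x ∈ A}
  set G := {x | 0 ≤ x ∧ x ∉ A}
  have hgap_le : ∀ x ∈ G, x ≤ g := fun x ⟨_, hx⟩ ↦ by
    by_contra! h
    exact hx (hrefl x fun h' ↦ (hA _ h').not_gt (by omega))
  have hsplit : {x | x ∈ A ∧ 0 ≤ x ∧ x ≤ g} = P ∪ (g - ·) '' G := by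
    ext x
    simp only [P, G, mem_ofPred_eq, mem_union, mem_image]
    constructor
    · rintro ⟨hx, h0, hg⟩
      by_cases hgx : g - x ∈ A
      · exact Or.inl ⟨hx, hgx⟩
      · exact Or.inr ⟨g - x, ⟨by omega, hgx⟩, by ring⟩
    · rintro (⟨hx, hgx⟩ | ⟨y, hy, rfl⟩)
      · exact ⟨hx, hA x hx, by linarith [hA _ hgx]⟩
      · exact ⟨hrefl _ (by simpa using hy.2), by linarith [hgap_le y hy], by linarith [hy.1]⟩
  have hdisj : Disjoint P ((g - ·) '' G) := by
    rw [disjoint_left]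
    rintro _ ⟨_, hgx⟩ ⟨y, ⟨_, hy⟩, rfl⟩
    exact hy (by simpa using hgx)
  have hPfin : P.Finite := (finite_Icc 0 g).subset fun x ⟨hx, hgx⟩ ↦
    ⟨hA x hx, by linarith [hA _ hgx]⟩
  have hGfin : G.Finite := (finite_Icc 0 g).subset fun x hx ↦ ⟨hx.1, hgap_le x hx⟩
  rw [hsplit, ncard_union_eq hdisj hPfin (hGfin.image _),
    ncard_image_of_injective _ (sub_right_injective (G := ℤ))]
  push_cast
  ring

theorem injOn_fst_setOf_absolute (S : Set (ℤ × ℤ)) : InjOn Prod.fst {a | Absolute S a} := by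
  intro a ⟨haS, ha⟩ b ⟨hbS, hb⟩ hab
  by_contra hne
  rcases lt_or_gt_of_ne fun h ↦ hne (Prod.ext hab h) with h | h
  · exact ha.subset ⟨Or.inl ⟨hab.symm, h⟩, hbS⟩
  · exact hb.subset ⟨Or.inl ⟨hab, h⟩, haS⟩

theorem preimage_swap_delta (b : ℤ × ℤ) : Prod.swap ⁻¹' Delta b = Delta b.swap := by
  ext d
  simp only [Delta, Delta1, Delta2, mem_preimage, mem_union, mem_ofPred_eq, Prod.fst_swap,
    Prod.snd_swap]
  tauto

theorem delta_swap_inter_preimage_swap_eq_empty_iff {S : Set (ℤ × ℤ)} {b : ℤ × ℤ} :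
    Delta b.swap ∩ Prod.swap ⁻¹' S = ∅ ↔ Delta b ∩ S = ∅ := by
  rw [← preimage_swap_delta, ← preimage_inter, ← image_swap_eq_preimage_swap, image_eq_empty]

theorem setOf_absolute_preimage_swap (S : Set (ℤ × ℤ)) :
    {a | Absolute (Prod.swap ⁻¹' S) a} = Prod.swap ⁻¹' {a | Absolute S a} := by
  ext a
  simpa [Absolute] using fun _ ↦ delta_swap_inter_preimage_swap_eq_empty_iff (b := a.swap)

theorem GoodSemigroup.preimage_swap {S : Set (ℤ × ℤ)} (hS : GoodSemigroup S) :
    GoodSemigroup (Prod.swap ⁻¹' S) where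
  nonneg p hp := (hS.nonneg _ hp).symm
  zero_mem := hS.zero_mem
  add_mem a ha b hb := hS.add_mem _ ha _ hb
  inf_mem a ha b hb := hS.inf_mem _ ha _ hb
  g2_fst a ha b hb h1 h2 :=
    let ⟨d, hd, hd2, hd1⟩ := hS.g2_snd _ ha _ hb h1 h2
    ⟨d.swap, by simpa using hd, hd2, hd1⟩
  g2_snd a ha b hb h1 h2 :=
    let ⟨d, hd, hd1, hd2⟩ := hS.g2_fst _ ha _ hb h1 h2
    ⟨d.swap, by simpa using hd, hd1, hd2⟩
  g3 :=
    let ⟨c, hc⟩ := hS.g3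
    ⟨c.swap, fun z hz ↦ hc z.swap ⟨hz.2, hz.1⟩⟩

theorem IsSymmetric.preimage_swap {S : Set (ℤ × ℤ)} {γ : ℤ × ℤ} (hsym : IsSymmetric S γ) :
    IsSymmetric (Prod.swap ⁻¹' S) γ.swap := by
  intro a
  rw [mem_preimage, hsym, ← delta_swap_inter_preimage_swap_eq_empty_iff, Prod.swap_sub,
    Prod.swap_swap]

namespace GoodSemigroup

variable {S : Set (ℤ × ℤ)} {γ : ℤ × ℤ}

theorem absolute_of_forall_snd_le (hS : GoodSemigroup S) {a : ℤ × ℤ} (ha : a ∈ S)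
    (hcol : ∀ y, (a.1, y) ∈ S → y ≤ a.2) : Absolute S a := by
  refine ⟨ha, eq_empty_of_forall_notMem ?_⟩
  rintro d ⟨⟨hd1, hd2⟩ | ⟨hd2, hd1⟩, hdS⟩
  · exact (hcol d.2 (hd1 ▸ hdS)).not_gt hd2
  · obtain ⟨e, heS, he2, he1⟩ := hS.g2_snd a ha d hdS hd2.symm hd1.ne
    rw [min_eq_left hd1.le] at he1
    exact (hcol e.2 (he1 ▸ heS)).not_gt he2

theorem mem_iff_of_lt_snd (hS : GoodSemigroup S) (hsym : IsSymmetric S γ) {x y : ℤ}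
    (hy : γ.2 < y) : (x, y) ∈ S ↔ γ.1 - x ∉ Prod.fst '' S := by
  rw [hsym, eq_empty_iff_forall_notMem]
  change (∀ d, d ∉ Delta (γ.1 - x, γ.2 - y) ∩ S) ↔ _
  constructor
  · rintro h ⟨d, hdS, hd⟩
    exact h d ⟨Or.inl ⟨hd, by linarith [(hS.nonneg d hdS).2]⟩, hdS⟩
  · rintro h d ⟨⟨hd, _⟩ | ⟨hd, _⟩, hdS⟩
    · exact h ⟨d, hdS, hd⟩
    · linarith [(hS.nonneg d hdS).2]

theorem image_fst_absolute (hS : GoodSemigroup S) (hsym : IsSymmetric S γ) :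
    Prod.fst '' {a | Absolute S a} = {x | x ∈ Prod.fst '' S ∧ γ.1 - x ∈ Prod.fst '' S} := by
  ext x
  constructor
  · rintro ⟨a, ⟨haS, ha⟩, rfl⟩
    refine ⟨⟨a, haS, rfl⟩, by_contra fun h ↦ ?_⟩
    have hup : (a.1, max a.2 γ.2 + 1) ∈ S := (hS.mem_iff_of_lt_snd hsym (by omega)).2 h
    exact eq_empty_iff_forall_notMem.1 ha (a.1, max a.2 γ.2 + 1)
      ⟨Or.inl ⟨rfl, show a.2 < max a.2 γ.2 + 1 by omega⟩, hup⟩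
  · rintro ⟨⟨p, hpS, rfl⟩, hrefl⟩
    have hbdd : ∀ y, (p.1, y) ∈ S → y ≤ γ.2 := fun y hy ↦
      not_lt.1 fun h ↦ (hS.mem_iff_of_lt_snd hsym h).1 hy hrefl
    obtain ⟨m, hmS, hmax⟩ := Int.exists_greatest_of_bdd ⟨γ.2, hbdd⟩ ⟨p.2, hpS⟩
    exact ⟨(p.1, m), hS.absolute_of_forall_snd_le hmS hmax, rfl⟩

theorem ncard_fst_sub_ncard_gaps_eq (hS : GoodSemigroup S) (hsym : IsSymmetric S γ) :
    ({x | x ∈ Prod.fst '' S ∧ 0 ≤ x ∧ x ≤ γ.1}.ncard : ℤ) -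
        {x | 0 ≤ x ∧ x ∉ Prod.fst '' S}.ncard = {a | Absolute S a}.ncard := by
  rw [← (injOn_fst_setOf_absolute S).ncard_image, hS.image_fst_absolute hsym]
  refine ncard_sub_ncard_gaps_eq ?_ fun x hx ↦
    ⟨(x, γ.2 + 1), (hS.mem_iff_of_lt_snd hsym (lt_add_one _)).2 hx, rfl⟩
  rintro _ ⟨p, hp, rfl⟩
  exact (hS.nonneg p hp).1

theorem ncard_snd_sub_ncard_gaps_eq (hS : GoodSemigroup S) (hsym : IsSymmetric S γ) :
    ({x | x ∈ Prod.snd '' S ∧ 0 ≤ x ∧ x ≤ γ.2}.ncard : ℤ) -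
        {x | 0 ≤ x ∧ x ∉ Prod.snd '' S}.ncard = {a | Absolute S a}.ncard := by
  have h := hS.preimage_swap.ncard_fst_sub_ncard_gaps_eq hsym.preimage_swap
  rwa [setOf_absolute_preimage_swap,
    ncard_preimage_of_injective_subset_range Prod.swap_injective
      (Prod.swap_surjective.range_eq ▸ subset_univ _),
    ← image_swap_eq_preimage_swap, image_image] at h

end GoodSemigroup

theorem count_absolute_general (S : Set (ℤ × ℤ)) (hS : GoodSemigroup S) (γ : ℤ × ℤ)
    (hsym : IsSymmetric S γ) :
    (({x : ℤ | x ∈ Prod.fst '' S ∧ 0 ≤ x ∧ x ≤ γ.1}.ncard : ℤ) -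
        {x : ℤ | 0 ≤ x ∧ x ∉ Prod.fst '' S}.ncard =
      ({x : ℤ | x ∈ Prod.snd '' S ∧ 0 ≤ x ∧ x ≤ γ.2}.ncard : ℤ) -
        {x : ℤ | 0 ≤ x ∧ x ∉ Prod.snd '' S}.ncard) ∧
    (({x : ℤ | x ∈ Prod.fst '' S ∧ 0 ≤ x ∧ x ≤ γ.1}.ncard : ℤ) -
        {x : ℤ | 0 ≤ x ∧ x ∉ Prod.fst '' S}.ncard =
      ({a : ℤ × ℤ | Absolute S a}.ncard : ℤ)) :=
  ⟨(hS.ncard_fst_sub_ncard_gaps_eq hsym).trans (hS.ncard_snd_sub_ncard_gaps_eq hsym).symm,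
    hS.ncard_fst_sub_ncard_gaps_eq hsym⟩

/-- For a symmetric good semigroup, `n(S₁) - b(S₁) = n(S₂) - b(S₂)`, and this
common value is the number of absolute elements of `S`. -/
theorem count_absolute (S : Set (ℤ × ℤ)) (hS : GoodSemigroup S) (hloc : IsLocal S)
    (c γ : ℤ × ℤ) (hc : IsConductor S c) (hγ : γ = c - (1, 1))
    (hsym : IsSymmetric S γ) :
    (({x : ℤ | x ∈ Prod.fst '' S ∧ 0 ≤ x ∧ x ≤ γ.1}.ncard : ℤ) -
        {x : ℤ | 0 ≤ x ∧ x ∉ Prod.fst '' S}.ncard =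
      ({x : ℤ | x ∈ Prod.snd '' S ∧ 0 ≤ x ∧ x ≤ γ.2}.ncard : ℤ) -
        {x : ℤ | 0 ≤ x ∧ x ∉ Prod.snd '' S}.ncard) ∧
    (({x : ℤ | x ∈ Prod.fst '' S ∧ 0 ≤ x ∧ x ≤ γ.1}.ncard : ℤ) -
        {x : ℤ | 0 ≤ x ∧ x ∉ Prod.fst '' S}.ncard =
      ({a : ℤ × ℤ | Absolute S a}.ncard : ℤ)) :=
  count_absolute_general S hS γ hsym
end
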